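/- arXiv:2511.18666 — 2 statements merged into one kernel-verified Lean document; each statement's English description precedes it below -/
import Mathlib

section
/- Let d = d(n) be an integer with d ≤ (d*_n − 1)/2. Then with probability tending to 1 as n → ∞, there is a unique shortest path in G_n from vertex 1 to every vertex at distance at most d from vertex 1; that is, the union of all shortest paths from vertex 1 restricted to vertices at distance at most d is a tree. -/
open MeasureTheory Filter

noncomputable section

/-- Bernoulli-type measure on `Bool` with success probability `q`. -/
def bernoulliBool (q : ℝ) : Measure Bool :=
  ENNReal.ofReal (1 - q) • Measure.dirac false + ENNReal.ofReal q • Measure.dirac true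

/-- Sample space for a random graph on `n` vertices: one Boolean per ordered pair of
vertices; only the value at `(min u v, max u v)` for `u ≠ v` is relevant. -/
abbrev EdgeConfig (n : ℕ) := Fin n → Fin n → Bool

/-- The Erdős–Rényi measure `G(n, q)`: all edge indicators are independent `Bernoulli(q)`. -/
def erMeasure (n : ℕ) (q : ℝ) : Measure (EdgeConfig n) :=
  Measure.pi fun _ => Measure.pi fun _ => bernoulliBool q

/-- The simple graph determined by an edge configuration. -/
def graphOf {n : ℕ} (ω : EdgeConfig n) : SimpleGraph (Fin n) where
  Adj u v := u ≠ v ∧ ω (min u v) (max u v) = true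
  symm := by
    constructor
    intro u v h
    refine ⟨h.1.symm, ?_⟩
    rw [min_comm, max_comm]
    exact h.2
  loopless := by
    constructor
    intro u h
    exact h.1 rfl

/-- `q_n = α_n · log n / n`. -/
def qSeq (α : ℕ → ℝ) (n : ℕ) : ℝ := α n * Real.log n / n

/-- `d*_n`: the smallest integer `d` with `(n q)^d ≥ n / (log log n)^2`. -/
def dstar (n : ℕ) (q : ℝ) : ℕ :=
  sInf {d : ℕ | (n : ℝ) / Real.log (Real.log n) ^ 2 ≤ ((n : ℝ) * q) ^ d}

/-- `λ_n ∈ (0,1)`, defined by `log (1/λ_n) = (n q_n)^{d*_n} / n`. -/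
def lambdaSeq (n : ℕ) (q : ℝ) : ℝ :=
  Real.exp (-(((n : ℝ) * q) ^ dstar n q / (n : ℝ)))

/-- Convergence in probability of a sequence of real random variables (defined on a
sequence of measure spaces) to a constant `c`. -/
def TendstoInProb {Ω : ℕ → Type*} [∀ n, MeasurableSpace (Ω n)]
    (μ : ∀ n, Measure (Ω n)) (X : ∀ n, Ω n → ℝ) (c : ℝ) : Prop :=
  ∀ ε : ℝ, 0 < ε →
    Tendsto (fun n => μ n {ω | ε < |X n ω - c|}) atTop (nhds 0)

/-- The number of vertices at distance `d` from the root vertex (vertex "1" of the paper,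
formalized as `0 : Fin (n+1)`). -/
def Ndist (n : ℕ) (ω : EdgeConfig (n + 1)) (d : ℕ) : ℕ :=
  Set.ncard {v : Fin (n + 1) | (graphOf ω).Reachable 0 v ∧ (graphOf ω).dist 0 v = d}


namespace UPL
open SimpleGraph
variable {V : Type*} {G : SimpleGraph V} {u v : V}


lemma getVert_copy {u v u' v' : V} (p : G.Walk u v) (h : u = u') (h' : v = v') (i : ℕ) :
    (p.copy h h').getVert i = p.getVert i := by subst h; subst h'; rfl

lemma walk_ext_getVert : ∀ {u v : V} (p p' : G.Walk u v), p.length = p'.length →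
    (∀ i, p.getVert i = p'.getVert i) → p = p'
  | _, _, .nil, .nil, _, _ => rfl
  | _, _, .cons h p, .cons h' p', hl, hg => by
    have h1 : (Walk.cons h p).getVert 1 = (Walk.cons h' p').getVert 1 := hg 1
    simp only [Walk.getVert_cons_succ] at h1
    have h1' : p.getVert 0 = p'.getVert 0 := h1
    rw [Walk.getVert_zero, Walk.getVert_zero] at h1'
    subst h1'
    have := walk_ext_getVert p p' (by simpa using hl) (fun i => by
      have := hg (i+1); simpa [Walk.getVert_cons_succ] using this)
    subst this; rfl

lemma exists_take : ∀ {u v : V} (p : G.Walk u v) (i : ℕ), i ≤ p.length →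
    ∃ q : G.Walk u (p.getVert i), q.length = i ∧ ∀ j ≤ i, q.getVert j = p.getVert j
  | _, _, .nil, i, hi => by
    have : i = 0 := by simpa using hi
    subst this
    exact ⟨.nil, rfl, by intro j hj; interval_cases j; rfl⟩
  | _, _, .cons h p, 0, _ => ⟨.nil, rfl, by intro j hj; interval_cases j; rfl⟩
  | _, _, .cons h p, i+1, hi => by
    obtain ⟨q, hq1, hq2⟩ := exists_take p i (by simpa using hi)
    refine ⟨(Walk.cons h q).copy rfl (Walk.getVert_cons_succ p h).symm, by simp [hq1], ?_⟩
    rintro (_|j) hj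
    · simp [getVert_copy]
    · rw [getVert_copy, Walk.getVert_cons_succ, Walk.getVert_cons_succ]
      exact hq2 j (by omega)

lemma exists_drop : ∀ {u v : V} (p : G.Walk u v) (i : ℕ),
    ∃ q : G.Walk (p.getVert i) v, q.length = p.length - i
  | _, _, .nil, i => ⟨(Walk.nil).copy (by simp [Walk.getVert_of_length_le]) rfl, by simp⟩
  | _, _, .cons h p, 0 => ⟨(Walk.cons h p).copy (by simp) rfl, by simp⟩
  | _, _, .cons h p, i+1 => by
    obtain ⟨q, hq⟩ := exists_drop p i
    exact ⟨q.copy (Walk.getVert_cons_succ p h).symm rfl, by simpa using hq⟩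

lemma dist_getVert (p : G.Walk u v) (hk : G.dist u v = p.length) {i : ℕ} (hi : i ≤ p.length) :
    G.dist u (p.getVert i) = i := by
  obtain ⟨q, hq1, -⟩ := exists_take p i hi
  obtain ⟨w, hw⟩ := exists_drop p i
  have h1 := SimpleGraph.dist_le q
  rw [hq1] at h1
  refine le_antisymm h1 ?_
  have hreach : G.Reachable u (p.getVert i) := ⟨q⟩
  obtain ⟨r, hr⟩ := hreach.exists_walk_length_eq_dist
  have : G.dist u v ≤ (r.append w).length := SimpleGraph.dist_le _
  rw [SimpleGraph.Walk.length_append, hr, hw] at this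
  omega

/-- Tadpole witness: a path of length `k` from the root together with a second
disjoint branch of length `ℓ` from vertex `k-ℓ` back to vertex `k`. -/
def TW (G : SimpleGraph V) (r : V) (k ℓ : ℕ) : Prop :=
  ∃ f : ℕ → V, f 0 = r ∧ Set.InjOn f (Set.Iio (k+ℓ)) ∧
    (∀ j, j < k → G.Adj (f j) (f (j+1))) ∧ G.Adj (f (k-ℓ)) (f (k+1)) ∧
    (∀ i, 1 ≤ i → i ≤ ℓ-2 → G.Adj (f (k+i)) (f (k+i+1))) ∧ G.Adj (f (k+ℓ-1)) (f k)

lemma tadpole_of_two_shortest (r : V) : ∀ k : ℕ, ∀ (v : V) (p p' : G.Walk r v),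
    G.dist r v = k → p.length = k → p'.length = k → p ≠ p' →
    ∃ k' ℓ, 2 ≤ ℓ ∧ ℓ ≤ k' ∧ k' ≤ k ∧ TW G r k' ℓ := by
  intro k
  induction k using Nat.strong_induction_on with
  | _ k IH =>
  intro v p p' hk hp hp' hne
  classical
  have hvk : p.getVert k = v := hp ▸ SimpleGraph.Walk.getVert_length p
  have hvk' : p'.getVert k = v := hp' ▸ SimpleGraph.Walk.getVert_length p'
  have hdp : ∀ i ≤ k, G.dist r (p.getVert i) = i := fun i hi =>
    dist_getVert p (hp ▸ hk) (hp ▸ hi)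
  have hdp' : ∀ i ≤ k, G.dist r (p'.getVert i) = i := fun i hi =>
    dist_getVert p' (hp' ▸ hk) (hp' ▸ hi)
  have hposs : ∀ i j, i ≤ k → j ≤ k → p.getVert i = p'.getVert j → i = j := by
    intro i j hi hj hij
    have := hdp i hi
    rw [hij, hdp' j hj] at this
    omega
  have hposp : ∀ i j, i ≤ k → j ≤ k → p.getVert i = p.getVert j → i = j := by
    intro i j hi hj hij
    have := hdp i hi
    rw [hij, hdp j hj] at this
    omega
  have hposp' : ∀ i j, i ≤ k → j ≤ k → p'.getVert i = p'.getVert j → i = j := by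
    intro i j hi hj hij
    have := hdp' i hi
    rw [hij, hdp' j hj] at this
    omega
  have hk0 : k ≠ 0 := by
    intro h
    subst h
    exact hne (walk_ext_getVert p p' (by omega) (fun i => by
      rw [SimpleGraph.Walk.getVert_of_length_le p (by omega),
        SimpleGraph.Walk.getVert_of_length_le p' (by omega)]))
  set S : Finset ℕ := (Finset.range k).filter (fun i => p.getVert i = p'.getVert i) with hS
  have h0S : 0 ∈ S := by
    simp only [hS, Finset.mem_filter, Finset.mem_range]
    exact ⟨by omega, by rw [SimpleGraph.Walk.getVert_zero, SimpleGraph.Walk.getVert_zero]⟩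
  set m := S.max' ⟨0, h0S⟩ with hm
  have hmS : m ∈ S := S.max'_mem _
  have hmk : m < k := by
    have := Finset.mem_filter.mp hmS
    simpa using this.1
  have hmeq : p.getVert m = p'.getVert m := (Finset.mem_filter.mp hmS).2
  have hmmax : ∀ j, m < j → j < k → p.getVert j ≠ p'.getVert j := by
    intro j hj1 hj2 heq
    have : j ∈ S := by
      simp only [hS, Finset.mem_filter, Finset.mem_range]; exact ⟨hj2, heq⟩
    have := S.le_max' j this
    omega
  by_cases hcase : m = k - 1
  · -- recurse on the prefix walks of length k-1
    obtain ⟨q, hq1, hq2⟩ := exists_take p (k-1) (by omega)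
    obtain ⟨q', hq'1, hq'2⟩ := exists_take p' (k-1) (by omega)
    have he : p'.getVert (k-1) = p.getVert (k-1) := by rw [← hcase]; exact hmeq.symm
    set q'' := q'.copy rfl he with hq''
    have hgq'' : ∀ j, q''.getVert j = q'.getVert j := fun j => getVert_copy _ _ _ _
    have hdist2 : G.dist r (p.getVert (k-1)) = k - 1 := hdp (k-1) (by omega)
    have hne2 : q ≠ q'' := by
      intro h
      apply hne
      refine walk_ext_getVert p p' (by omega) (fun i => ?_)
      rcases le_or_gt i (k-1) with hi | hi
      · rw [← hq2 i hi, h, hgq'', hq'2 i hi]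
      · rw [SimpleGraph.Walk.getVert_of_length_le p (by omega),
          SimpleGraph.Walk.getVert_of_length_le p' (by omega)]
    obtain ⟨k', ℓ, h1, h2, h3, h4⟩ := IH (k-1) (by omega) (p.getVert (k-1)) q q'' hdist2
      (by omega) (by simp [hq'', hq'1]) hne2
    exact ⟨k', ℓ, h1, h2, by omega, h4⟩
  · -- build the tadpole with k' = k, ℓ = k - m
    set ℓ := k - m with hℓ
    have hℓ2 : 2 ≤ ℓ := by omega
    refine ⟨k, ℓ, hℓ2, by omega, le_rfl, ?_⟩
    refine ⟨fun j => if j ≤ k then p.getVert j else p'.getVert (j - k + m), ?_, ?_, ?_, ?_, ?_, ?_⟩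
    · simp [SimpleGraph.Walk.getVert_zero]
    · intro x hx y hy hxy
      simp only [Set.mem_Iio] at hx hy
      by_cases h1 : x ≤ k <;> by_cases h2 : y ≤ k <;>
        simp only [h1, h2, if_pos, if_neg, if_true, if_false] at hxy
      · exact hposp x y h1 h2 hxy
      · exfalso
        have hj : x = y - k + m := hposs x (y-k+m) h1 (by omega) hxy
        rw [hj] at hxy
        exact hmmax (y-k+m) (by omega) (by omega) hxy
      · exfalso
        have hj : y = x - k + m := hposs y (x-k+m) h2 (by omega) hxy.symm
        rw [hj] at hxy
        exact hmmax (x-k+m) (by omega) (by omega) hxy.symm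
      · have := hposp' (x-k+m) (y-k+m) (by omega) (by omega) hxy
        omega
    · intro j hj
      simp only [if_pos (by omega : j ≤ k), if_pos (by omega : j + 1 ≤ k)]
      exact SimpleGraph.Walk.adj_getVert_succ p (by omega)
    · have h1 : k - ℓ = m := by omega
      simp only [h1, if_pos (by omega : m ≤ k), if_neg (by omega : ¬ (k+1 ≤ k))]
      have h2 : k + 1 - k + m = m + 1 := by omega
      rw [h2, hmeq]
      exact SimpleGraph.Walk.adj_getVert_succ p' (by omega)
    · intro i hi1 hi2
      simp only [if_neg (by omega : ¬ (k+i ≤ k)), if_neg (by omega : ¬ (k+i+1 ≤ k))]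
      have h2 : k + i - k + m = m + i := by omega
      have h3 : k + i + 1 - k + m = m + i + 1 := by omega
      rw [h2, h3]
      exact SimpleGraph.Walk.adj_getVert_succ p' (by omega)
    · simp only [if_neg (by omega : ¬ (k+ℓ-1 ≤ k)), if_pos (le_refl k)]
      have h2 : k + ℓ - 1 - k + m = k - 1 := by omega
      rw [h2, hvk]
      have := SimpleGraph.Walk.adj_getVert_succ p' (show k - 1 < p'.length by omega)
      have h3 : k - 1 + 1 = k := by omega
      rw [h3, hvk'] at this
      exact this



instance instBB (q : ℝ) : IsFiniteMeasure (bernoulliBool q) := by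
  constructor
  simp only [bernoulliBool, Measure.add_apply, Measure.smul_apply, smul_eq_mul]
  exact ENNReal.add_lt_top.mpr ⟨by finiteness, by finiteness⟩

lemma bernoulliBool_true (q : ℝ) (hq0 : 0 ≤ q) : bernoulliBool q {true} = ENNReal.ofReal q := by
  simp [bernoulliBool, Measure.dirac_apply' _ (by trivial : MeasurableSet ({true} : Set Bool))]

lemma bernoulliBool_univ (q : ℝ) (hq0 : 0 ≤ q) (hq1 : q ≤ 1) : bernoulliBool q Set.univ = 1 := by
  simp only [bernoulliBool, Measure.add_apply, Measure.smul_apply, smul_eq_mul,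
    Measure.dirac_apply' _ MeasurableSet.univ]
  rw [Set.indicator_of_mem (Set.mem_univ _), Set.indicator_of_mem (Set.mem_univ _)]
  simp only [Pi.one_apply, mul_one]
  rw [← ENNReal.ofReal_add (by linarith) hq0]
  norm_num

lemma erMeasure_cylinder (n : ℕ) (q : ℝ) (hq0 : 0 ≤ q) (hq1 : q ≤ 1)
    (F : Finset (Fin n × Fin n)) :
    erMeasure n q {ω : EdgeConfig n | ∀ pr ∈ F, ω pr.1 pr.2 = true}
      = ENNReal.ofReal q ^ F.card := by
  classical
  have hset : {ω : EdgeConfig n | ∀ pr ∈ F, ω pr.1 pr.2 = true}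
      = Set.pi Set.univ (fun a => Set.pi Set.univ
          (fun b => if (a, b) ∈ F then ({true} : Set Bool) else Set.univ)) := by
    ext ω
    simp only [Set.mem_setOf_eq, Set.mem_pi, Set.mem_univ, forall_true_left]
    constructor
    · intro h a b
      by_cases hab : (a, b) ∈ F
      · simp [hab, h (a, b) hab]
      · simp [hab]
    · intro h pr hpr
      have := h pr.1 pr.2
      simp only [hpr, if_pos] at this
      simpa using this
  rw [hset]
  rw [erMeasure, Measure.pi_pi]
  have : ∀ a : Fin n, (Measure.pi fun _ : Fin n => bernoulliBool q)
      (Set.pi Set.univ (fun b => if (a, b) ∈ F then ({true} : Set Bool) else Set.univ))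
      = ∏ b : Fin n, (if (a, b) ∈ F then ENNReal.ofReal q else 1) := by
    intro a
    rw [Measure.pi_pi]
    congr 1
    ext b
    split
    · exact bernoulliBool_true q hq0
    · exact bernoulliBool_univ q hq0 hq1
  simp_rw [this]
  rw [← Finset.prod_product']
  rw [Finset.univ_product_univ]
  rw [Finset.prod_ite_mem, Finset.univ_inter, Finset.prod_const]

lemma erMeasure_univ (n : ℕ) (q : ℝ) (hq0 : 0 ≤ q) (hq1 : q ≤ 1) :
    erMeasure n q Set.univ = 1 := by
  have := erMeasure_cylinder n q hq0 hq1 ∅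
  simpa using this

lemma erMeasure_prob (n : ℕ) (q : ℝ) (hq0 : 0 ≤ q) (hq1 : q ≤ 1) :
    IsProbabilityMeasure (erMeasure n q) :=
  ⟨erMeasure_univ n q hq0 hq1⟩



/-- abstract edge list for the tadpole structure -/
def ep (k ℓ j : ℕ) : ℕ × ℕ :=
  if j < k then (j, j+1)
  else if j = k then (k-ℓ, k+1)
  else if j = k+ℓ-1 then (k+ℓ-1, k)
  else (j, j+1)

lemma ep_bounds {k ℓ : ℕ} (h2 : 2 ≤ ℓ) (hlk : ℓ ≤ k) {j : ℕ} (hj : j < k+ℓ) :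
    (ep k ℓ j).1 < k+ℓ ∧ (ep k ℓ j).2 < k+ℓ ∧ (ep k ℓ j).1 ≠ (ep k ℓ j).2 := by
  unfold ep
  split_ifs <;> simp <;> omega

lemma ep_unordered_inj {k ℓ : ℕ} (h2 : 2 ≤ ℓ) (hlk : ℓ ≤ k) {j j' : ℕ}
    (hj : j < k+ℓ) (hj' : j' < k+ℓ)
    (h : ((ep k ℓ j).1 = (ep k ℓ j').1 ∧ (ep k ℓ j).2 = (ep k ℓ j').2) ∨
         ((ep k ℓ j).1 = (ep k ℓ j').2 ∧ (ep k ℓ j).2 = (ep k ℓ j').1)) : j = j' := by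
  unfold ep at h
  split_ifs at h <;> simp at h <;> omega

lemma min_max_eq {α : Type*} [LinearOrder α] {x y x' y' : α}
    (h1 : min x y = min x' y') (h2 : max x y = max x' y') :
    (x = x' ∧ y = y') ∨ (x = y' ∧ y = x') := by
  simp only [min_def, max_def] at h1 h2
  split_ifs at h1 h2 <;> tauto

def vOf {N s : ℕ} (g : Fin s → Fin (N+1)) (j : ℕ) : Fin (N+1) :=
  if h : j < s then g ⟨j, h⟩ else 0

/-- The sorted vertex-pair set of the tadpole edges under embedding `g`. -/
def sortedF (N k ℓ : ℕ) (g : Fin (k+ℓ) → Fin (N+1)) : Finset (Fin (N+1) × Fin (N+1)) :=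
  (Finset.range (k+ℓ)).image (fun j =>
    (min (vOf g (ep k ℓ j).1) (vOf g (ep k ℓ j).2),
     max (vOf g (ep k ℓ j).1) (vOf g (ep k ℓ j).2)))

def tadEvent (N k ℓ : ℕ) (g : Fin (k+ℓ) → Fin (N+1)) : Set (EdgeConfig (N+1)) :=
  {ω | ∀ pr ∈ sortedF N k ℓ g, ω pr.1 pr.2 = true}

def validFinset (N k ℓ : ℕ) : Finset (Fin (k+ℓ) → Fin (N+1)) :=
  Finset.univ.filter (fun g => vOf g 0 = 0 ∧ Function.Injective g)

lemma sortedF_card {N k ℓ : ℕ} (h2 : 2 ≤ ℓ) (hlk : ℓ ≤ k)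
    {g : Fin (k+ℓ) → Fin (N+1)} (hg : Function.Injective g) :
    (sortedF N k ℓ g).card = k + ℓ := by
  rw [sortedF, Finset.card_image_of_injOn, Finset.card_range]
  intro j hj j' hj' hee
  simp only [Finset.coe_range, Set.mem_Iio] at hj hj'
  have hb := ep_bounds h2 hlk hj
  have hb' := ep_bounds h2 hlk hj'
  have h1 := congrArg Prod.fst hee
  have h2' := congrArg Prod.snd hee
  simp only at h1 h2'
  have := min_max_eq h1 h2'
  have hvv : ∀ a b : ℕ, a < k+ℓ → b < k+ℓ → vOf g a = vOf g b → a = b := by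
    intro a b hA hB hab
    rw [vOf, vOf, dif_pos hA, dif_pos hB] at hab
    have := hg hab
    simpa using congrArg Fin.val this
  refine ep_unordered_inj h2 hlk hj hj' ?_
  rcases this with ⟨ha, hbb⟩ | ⟨ha, hbb⟩
  · exact Or.inl ⟨hvv _ _ hb.1 hb'.1 ha, hvv _ _ hb.2.1 hb'.2.1 hbb⟩
  · exact Or.inr ⟨hvv _ _ hb.1 hb'.2.1 ha, hvv _ _ hb.2.1 hb'.1 hbb⟩

lemma validFinset_card (N k ℓ : ℕ) (h2 : 2 ≤ ℓ) (hlk : ℓ ≤ k) :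
    (validFinset N k ℓ).card ≤ (N+1) ^ (k+ℓ-1) := by
  classical
  have := Finset.card_le_card_of_injOn
    (s := validFinset N k ℓ) (t := (Finset.univ : Finset (Fin (k+ℓ-1) → Fin (N+1))))
    (f := fun (g : Fin (k+ℓ) → Fin (N+1)) => fun i : Fin (k+ℓ-1) => g ⟨i.1+1, by omega⟩)
    (fun g _ => Finset.mem_univ _) ?_
  · calc (validFinset N k ℓ).card ≤ Finset.univ.card := this
      _ = (N+1) ^ (k+ℓ-1) := by simp [Fintype.card_fun]
  · intro g hg g' hg' hgg
    simp only [validFinset, Finset.mem_coe, Finset.mem_filter] at hg hg'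
    funext i
    rcases Nat.eq_zero_or_pos i.1 with h0 | hpos
    · have e1 : i = ⟨0, by omega⟩ := by ext; exact h0
      rw [e1]
      have := hg.2.1.trans hg'.2.1.symm
      have h0 : 0 < k+ℓ := by omega
      simp only [vOf, dif_pos h0] at this
      exact this
    · have := congrFun hgg ⟨i.1-1, by omega⟩
      simp only at this
      convert this using 2 <;> ext <;> simp <;> omega


lemma tw_adj {V : Type*} {G : SimpleGraph V} {k ℓ : ℕ} (hlk : ℓ ≤ k) {f : ℕ → V}
    (hpath : ∀ j, j < k → G.Adj (f j) (f (j+1)))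
    (hat : G.Adj (f (k-ℓ)) (f (k+1)))
    (hint : ∀ i, 1 ≤ i → i ≤ ℓ-2 → G.Adj (f (k+i)) (f (k+i+1)))
    (hlast : G.Adj (f (k+ℓ-1)) (f k)) :
    ∀ j, j < k+ℓ → G.Adj (f (ep k ℓ j).1) (f (ep k ℓ j).2) := by
  intro j hj
  unfold ep
  split_ifs with hA hB hC
  · exact hpath j hA
  · subst hB; exact hat
  · exact hlast
  · have h := hint (j-k) (by omega) (by omega)
    have e1 : k + (j-k) = j := by omega
    rw [e1] at h
    exact h

def pairsFinset (D : ℕ) : Finset (ℕ × ℕ) :=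
  (Finset.range (D+1) ×ˢ Finset.range (D+1)).filter (fun kl => 2 ≤ kl.2 ∧ kl.2 ≤ kl.1)

lemma bad_subset (N D : ℕ) :
    {ω : EdgeConfig (N+1) | ¬ ∀ v : Fin (N+1), (graphOf ω).Reachable 0 v →
        (graphOf ω).dist 0 v ≤ D →
          ∃! p : (graphOf ω).Walk 0 v, p.length = (graphOf ω).dist 0 v} ⊆
      ⋃ kl ∈ pairsFinset D, ⋃ g ∈ validFinset N kl.1 kl.2, tadEvent N kl.1 kl.2 g := by
  intro ω hω
  simp only [Set.mem_setOf_eq] at hω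
  push_neg at hω
  obtain ⟨v, hreach, hdist, hnu⟩ := hω
  obtain ⟨p0, hp0⟩ := hreach.exists_walk_length_eq_dist
  obtain ⟨p1, hp1, hne⟩ : ∃ p1 : (graphOf ω).Walk 0 v,
      p1.length = (graphOf ω).dist 0 v ∧ p1 ≠ p0 := by
    by_contra hcon
    push_neg at hcon
    exact hnu ⟨p0, hp0, fun y hy => hcon y hy⟩
  obtain ⟨k, ℓ, h2, hlk, hkD, f, hf0, hfinj, hpath, hat, hint, hlast⟩ :=
    tadpole_of_two_shortest (0 : Fin (N+1)) ((graphOf ω).dist 0 v) v p1 p0 rfl hp1 hp0 hne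
  have hkD' : k ≤ D := le_trans hkD hdist
  have hs : 0 < k + ℓ := by omega
  set g : Fin (k+ℓ) → Fin (N+1) := fun i => f i.1 with hg
  have hvOf : ∀ a : ℕ, a < k+ℓ → vOf g a = f a := by
    intro a ha
    rw [vOf, dif_pos ha]
  have hginj : Function.Injective g := by
    intro i i' hii
    exact Fin.ext (hfinj (Set.mem_Iio.mpr i.2) (Set.mem_Iio.mpr i'.2) hii)
  have hadj := tw_adj hlk hpath hat hint hlast
  simp only [Set.mem_iUnion]
  refine ⟨(k, ℓ), ?_, g, ?_, ?_⟩
  · simp only [pairsFinset, Finset.mem_filter, Finset.mem_product, Finset.mem_range]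
    exact ⟨⟨by omega, by omega⟩, h2, hlk⟩
  · simp only [validFinset, Finset.mem_filter, Finset.mem_univ, true_and]
    exact ⟨by rw [hvOf 0 hs, hf0], hginj⟩
  · intro pr hpr
    simp only [sortedF, Finset.mem_image, Finset.mem_range] at hpr
    obtain ⟨j, hj, rfl⟩ := hpr
    have hb := ep_bounds h2 hlk hj
    rw [hvOf _ hb.1, hvOf _ hb.2.1]
    exact (hadj j hj).2

lemma tadEvent_bound (N k ℓ : ℕ) (q : ℝ) (hq0 : 0 ≤ q) (hq1 : q ≤ 1)
    (h2 : 2 ≤ ℓ) (hlk : ℓ ≤ k) :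
    erMeasure (N+1) q (⋃ g ∈ validFinset N k ℓ, tadEvent N k ℓ g)
      ≤ ENNReal.ofReal (((N:ℝ)+1) ^ (k+ℓ-1) * q ^ (k+ℓ)) := by
  refine le_trans (measure_biUnion_finset_le (μ := erMeasure (N+1) q) _ _) ?_
  have hterm : ∀ g ∈ validFinset N k ℓ,
      erMeasure (N+1) q (tadEvent N k ℓ g) = ENNReal.ofReal q ^ (k+ℓ) := by
    intro g hgmem
    simp only [validFinset, Finset.mem_filter] at hgmem
    have := erMeasure_cylinder (N+1) q hq0 hq1 (sortedF N k ℓ g)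
    rw [tadEvent, this, sortedF_card h2 hlk hgmem.2.2]
  calc ∑ g ∈ validFinset N k ℓ, erMeasure (N+1) q (tadEvent N k ℓ g)
      = ∑ _g ∈ validFinset N k ℓ, ENNReal.ofReal q ^ (k+ℓ) := Finset.sum_congr rfl hterm
    _ = (validFinset N k ℓ).card * ENNReal.ofReal q ^ (k+ℓ) := by
        rw [Finset.sum_const, nsmul_eq_mul]
    _ ≤ ENNReal.ofReal (((N:ℝ)+1) ^ (k+ℓ-1)) * ENNReal.ofReal (q ^ (k+ℓ)) := by
        gcongr
        · calc ((validFinset N k ℓ).card : ENNReal)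
              = ENNReal.ofReal ((validFinset N k ℓ).card : ℝ) := by
                rw [ENNReal.ofReal_natCast]
            _ ≤ ENNReal.ofReal (((N:ℝ)+1) ^ (k+ℓ-1)) := by
                apply ENNReal.ofReal_le_ofReal
                have := validFinset_card N k ℓ h2 hlk
                calc ((validFinset N k ℓ).card : ℝ) ≤ (((N+1) ^ (k+ℓ-1) : ℕ) : ℝ) := by
                      exact_mod_cast this
                  _ = ((N:ℝ)+1) ^ (k+ℓ-1) := by push_cast; ring
        · rw [ENNReal.ofReal_pow hq0]
    _ = ENNReal.ofReal (((N:ℝ)+1) ^ (k+ℓ-1) * q ^ (k+ℓ)) := by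
        rw [ENNReal.ofReal_mul (by positivity)]

lemma geom_le {c : ℝ} (hc : 2 ≤ c) (n : ℕ) :
    ∑ i ∈ Finset.range (n+1), c^i ≤ 2 * c^n := by
  have h1 : (∑ i ∈ Finset.range (n+1), c^i) * (c-1) = c^(n+1) - 1 := geom_sum_mul c (n+1)
  have hpow : (1:ℝ) ≤ c^n := one_le_pow₀ (by linarith)
  have hs : c^(n+1) = c^n * c := pow_succ c n
  have h2 : (∑ i ∈ Finset.range (n+1), c^i) * (c-1) ≤ (2 * c^n) * (c-1) := by
    rw [h1]; nlinarith
  exact le_of_mul_le_mul_right h2 (by linarith)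

lemma real_sum_bound (N D : ℕ) (q : ℝ) (hq0 : 0 ≤ q) (hc : 2 ≤ ((N:ℝ)+1)*q) :
    ∑ kl ∈ pairsFinset D, ((N:ℝ)+1) ^ (kl.1+kl.2-1) * q ^ (kl.1+kl.2)
      ≤ 4 * (((N:ℝ)+1)*q) ^ (2*D) / ((N:ℝ)+1) := by
  set c : ℝ := ((N:ℝ)+1)*q with hcdef
  have hN : (0:ℝ) < (N:ℝ)+1 := by positivity
  have hcpos : (0:ℝ) < c := by linarith
  have inner : ∀ k, k ∈ Finset.range (D+1) →
      (∑ ℓ ∈ Finset.range (D+1), if 2 ≤ ℓ ∧ ℓ ≤ k then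
        ((N:ℝ)+1) ^ (k+ℓ-1) * q ^ (k+ℓ) else 0) ≤ 2 * c^(2*k) / ((N:ℝ)+1) := by
    intro k hk
    rw [← Finset.sum_filter]
    have hsub : (Finset.range (D+1)).filter (fun ℓ => 2 ≤ ℓ ∧ ℓ ≤ k) ⊆ Finset.Icc 2 k := by
      intro ℓ hℓ
      simp only [Finset.mem_filter] at hℓ
      exact Finset.mem_Icc.mpr hℓ.2
    calc (∑ ℓ ∈ (Finset.range (D+1)).filter (fun ℓ => 2 ≤ ℓ ∧ ℓ ≤ k),
            ((N:ℝ)+1) ^ (k+ℓ-1) * q ^ (k+ℓ))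
        ≤ ∑ ℓ ∈ Finset.Icc 2 k, ((N:ℝ)+1) ^ (k+ℓ-1) * q ^ (k+ℓ) :=
          Finset.sum_le_sum_of_subset_of_nonneg hsub (fun _ _ _ => by positivity)
      _ = (∑ ℓ ∈ Finset.Icc 2 k, c^(k+ℓ)) / ((N:ℝ)+1) := by
          rw [Finset.sum_div]
          refine Finset.sum_congr rfl (fun ℓ hℓ => ?_)
          have hℓ2 : 2 ≤ ℓ := (Finset.mem_Icc.mp hℓ).1
          have e1 : k+ℓ-1+1 = k+ℓ := by omega
          rw [hcdef, mul_pow, eq_div_iff (by linarith)]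
          calc ((N:ℝ)+1) ^ (k+ℓ-1) * q ^ (k+ℓ) * ((N:ℝ)+1)
              = ((N:ℝ)+1) ^ (k+ℓ-1+1) * q ^ (k+ℓ) := by ring
            _ = ((N:ℝ)+1) ^ (k+ℓ) * q ^ (k+ℓ) := by rw [e1]
      _ ≤ (2 * c^(2*k)) / ((N:ℝ)+1) := by
          have hSig : (∑ ℓ ∈ Finset.Icc 2 k, c^ℓ) ≤ 2 * c^k := by
            calc ∑ ℓ ∈ Finset.Icc 2 k, c^ℓ ≤ ∑ ℓ ∈ Finset.range (k+1), c^ℓ := by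
                  refine Finset.sum_le_sum_of_subset_of_nonneg ?_
                    (fun _ _ _ => by positivity)
                  intro ℓ hℓ
                  simp only [Finset.mem_Icc] at hℓ
                  simp only [Finset.mem_range]
                  omega
              _ ≤ 2 * c^k := geom_le hc k
          have hnum : (∑ ℓ ∈ Finset.Icc 2 k, c^(k+ℓ)) ≤ 2 * c^(2*k) := by
            calc ∑ ℓ ∈ Finset.Icc 2 k, c^(k+ℓ)
                = c^k * ∑ ℓ ∈ Finset.Icc 2 k, c^ℓ := by
                  rw [Finset.mul_sum]
                  exact Finset.sum_congr rfl (fun ℓ _ => by rw [pow_add])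
              _ ≤ c^k * (2 * c^k) :=
                  mul_le_mul_of_nonneg_left hSig (by positivity)
              _ = 2 * c^(2*k) := by rw [show 2*k = k+k by ring, pow_add]; ring
          exact (div_le_div_iff_of_pos_right hN).mpr hnum
      _ = 2 * c^(2*k) / ((N:ℝ)+1) := rfl
  have hc2 : 2 ≤ c^2 := by nlinarith
  calc ∑ kl ∈ pairsFinset D, ((N:ℝ)+1) ^ (kl.1+kl.2-1) * q ^ (kl.1+kl.2)
      = ∑ k ∈ Finset.range (D+1), ∑ ℓ ∈ Finset.range (D+1),
          if 2 ≤ ℓ ∧ ℓ ≤ k then ((N:ℝ)+1) ^ (k+ℓ-1) * q ^ (k+ℓ) else 0 := by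
        rw [pairsFinset, Finset.sum_filter, Finset.sum_product]
    _ ≤ ∑ k ∈ Finset.range (D+1), 2 * c^(2*k) / ((N:ℝ)+1) :=
        Finset.sum_le_sum inner
    _ = (2 / ((N:ℝ)+1)) * ∑ k ∈ Finset.range (D+1), (c^2)^k := by
        rw [Finset.mul_sum]
        exact Finset.sum_congr rfl (fun k _ => by rw [← pow_mul]; ring)
    _ ≤ (2 / ((N:ℝ)+1)) * (2 * (c^2)^D) :=
        mul_le_mul_of_nonneg_left (geom_le hc2 D) (by positivity)
    _ = 4 * c ^ (2*D) / ((N:ℝ)+1) := by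
        rw [← pow_mul]
        ring

end UPL

open UPL in
/-- Proposition 3.5, local tree structure of the shortest path DAG.
If `d(n) ≤ (d*_n − 1)/2`, then with probability tending to `1`, every vertex `v` at
distance at most `d(n)` from the root is joined to the root by a *unique* shortest
path (formalized: there is a unique walk from the root to `v` whose length equals the
graph distance).  (Graphs on `n+1` vertices are indexed by `n`; root = `0 : Fin (n+1)`.) -/



theorem unique_shortest_paths_locally
    (α : ℕ → ℝ) (a b : ℝ) (ha : 0 < a)
    (hαbound : ∀ᶠ n in atTop, a ≤ α n ∧ α n ≤ b)
    (d : ℕ → ℕ)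
    (hd : ∀ᶠ n in atTop, (d n : ℝ) ≤ ((dstar n (qSeq α n) : ℝ) - 1) / 2) :
    Tendsto (fun n => erMeasure (n + 1) (qSeq α (n + 1))
        {ω : EdgeConfig (n + 1) |
          ∀ v : Fin (n + 1), (graphOf ω).Reachable 0 v →
            (graphOf ω).dist 0 v ≤ d (n + 1) →
              ∃! p : (graphOf ω).Walk 0 v, p.length = (graphOf ω).dist 0 v})
      atTop (nhds 1) := by
  classical
  set good : ∀ n : ℕ, Set (EdgeConfig (n+1)) := fun n =>
    {ω : EdgeConfig (n + 1) |
      ∀ v : Fin (n + 1), (graphOf ω).Reachable 0 v →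
        (graphOf ω).dist 0 v ≤ d (n + 1) →
          ∃! p : (graphOf ω).Walk 0 v, p.length = (graphOf ω).dist 0 v} with hgood_def
  set bad : ∀ n : ℕ, Set (EdgeConfig (n+1)) := fun n => (good n)ᶜ with hbad_def
  have hα1 : ∀ᶠ n in atTop, a ≤ α (n+1) ∧ α (n+1) ≤ b :=
    (tendsto_add_atTop_nat 1).eventually hαbound
  have hd1 : ∀ᶠ n in atTop,
      (d (n+1) : ℝ) ≤ ((dstar (n+1) (qSeq α (n+1)) : ℝ) - 1) / 2 :=
    (tendsto_add_atTop_nat 1).eventually hd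
  have hab : a ≤ b := by
    obtain ⟨n, hn⟩ := hαbound.exists
    linarith [hn.1, hn.2]
  have hb0 : 0 < b := lt_of_lt_of_le ha hab
  have hNcast : Tendsto (fun n : ℕ => ((n:ℝ)+1)) atTop atTop :=
    tendsto_atTop_add_const_right _ 1 tendsto_natCast_atTop_atTop
  have hlogN : Tendsto (fun n : ℕ => Real.log ((n:ℝ)+1)) atTop atTop :=
    Real.tendsto_log_atTop.comp hNcast
  have hloglogN : Tendsto (fun n : ℕ => Real.log (Real.log ((n:ℝ)+1))) atTop atTop :=
    Real.tendsto_log_atTop.comp hlogN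
  have hlogdiv : Tendsto (fun n : ℕ => Real.log ((n:ℝ)+1) / ((n:ℝ)+1)) atTop (nhds 0) :=
    (Real.isLittleO_log_id_atTop.tendsto_div_nhds_zero).comp hNcast
  have hqcast : ∀ n : ℕ, qSeq α (n+1) = α (n+1) * Real.log ((n:ℝ)+1) / ((n:ℝ)+1) := by
    intro n
    rw [qSeq]
    push_cast
    ring_nf
  have hlogpos : ∀ n : ℕ, 0 ≤ Real.log ((n:ℝ)+1) := fun n =>
    Real.log_nonneg (by push_cast; linarith [Nat.cast_nonneg (α := ℝ) n])
  have hq0 : ∀ᶠ n : ℕ in atTop, 0 ≤ qSeq α (n+1) := by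
    filter_upwards [hα1] with n hn
    rw [hqcast n]
    have h1 : 0 ≤ α (n+1) := le_trans ha.le hn.1
    have h2 : (0:ℝ) < (n:ℝ)+1 := by positivity
    exact div_nonneg (mul_nonneg h1 (hlogpos n)) h2.le
  have hq1 : ∀ᶠ n : ℕ in atTop, qSeq α (n+1) ≤ 1 := by
    have h2 : Tendsto (fun n : ℕ => b * (Real.log ((n:ℝ)+1)/((n:ℝ)+1))) atTop (nhds 0) := by
      simpa using hlogdiv.const_mul b
    have h3 := h2.eventually_lt_const (by norm_num : (0:ℝ) < 1)
    filter_upwards [hα1, h3] with n hn h3n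
    rw [hqcast n, mul_div_assoc]
    have hdnn : 0 ≤ Real.log ((n:ℝ)+1)/((n:ℝ)+1) := by
      have h2' : (0:ℝ) < (n:ℝ)+1 := by positivity
      exact div_nonneg (hlogpos n) h2'.le
    calc α (n+1) * (Real.log ((n:ℝ)+1)/((n:ℝ)+1))
        ≤ b * (Real.log ((n:ℝ)+1)/((n:ℝ)+1)) := mul_le_mul_of_nonneg_right hn.2 hdnn
      _ ≤ 1 := h3n.le
  have hNq : ∀ n : ℕ, ((n:ℝ)+1) * qSeq α (n+1) = α (n+1) * Real.log ((n:ℝ)+1) := by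
    intro n
    rw [hqcast n]
    have h2 : ((n:ℝ)+1) ≠ 0 := by positivity
    field_simp
  have hc2 : ∀ᶠ n : ℕ in atTop, 2 ≤ ((n:ℝ)+1) * qSeq α (n+1) := by
    have h4 : Tendsto (fun n : ℕ => a * Real.log ((n:ℝ)+1)) atTop atTop :=
      hlogN.const_mul_atTop ha
    filter_upwards [hα1, h4.eventually_ge_atTop 2] with n hn h5
    rw [hNq n]
    calc (2:ℝ) ≤ a * Real.log ((n:ℝ)+1) := h5
      _ ≤ α (n+1) * Real.log ((n:ℝ)+1) := mul_le_mul_of_nonneg_right hn.1 (hlogpos n)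
  have hll1 : ∀ᶠ n : ℕ in atTop, 1 ≤ Real.log (Real.log ((n:ℝ)+1)) :=
    hloglogN.eventually_ge_atTop 1
  -- the eventual measure bound on the bad event
  have hbound : ∀ᶠ n : ℕ in atTop, erMeasure (n+1) (qSeq α (n+1)) (bad n)
      ≤ ENNReal.ofReal (4 / (Real.log (Real.log ((n:ℝ)+1)))^2) := by
    filter_upwards [hq0, hq1, hc2, hll1, hd1] with n h0 h1 h2 hll hdn
    set L : ℝ := Real.log (Real.log ((n:ℝ)+1)) with hL
    set D : ℕ := d (n+1) with hD
    set dst : ℕ := dstar (n+1) (qSeq α (n+1)) with hdst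
    set c : ℝ := ((n:ℝ)+1) * qSeq α (n+1) with hc
    have hdst1 : 1 ≤ dst := by
      by_contra hcon
      have : dst = 0 := by omega
      rw [this] at hdn
      simp at hdn
      have : (0:ℝ) ≤ (D:ℝ) := Nat.cast_nonneg D
      linarith
    have h2D : 2*D + 1 ≤ dst := by
      have : ((2*D + 1 : ℕ) : ℝ) ≤ (dst : ℝ) := by push_cast; linarith
      exact_mod_cast this
    have hnotmem : ¬ (((n+1:ℕ):ℝ) / Real.log (Real.log ((n+1:ℕ):ℝ)) ^ 2
        ≤ (((n+1:ℕ):ℝ) * qSeq α (n+1)) ^ (dst - 1)) := by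
      have hlt : dst - 1 < dstar (n+1) (qSeq α (n+1)) := by omega
      have := Nat.notMem_of_lt_sInf (s := {e : ℕ | ((n+1:ℕ):ℝ) / Real.log (Real.log ((n+1:ℕ):ℝ)) ^ 2
          ≤ (((n+1:ℕ):ℝ) * qSeq α (n+1)) ^ e}) hlt
      simpa [Set.mem_setOf_eq] using this
    have hcastN : ((n+1:ℕ):ℝ) = (n:ℝ)+1 := by push_cast; ring
    rw [hcastN] at hnotmem
    have hkey : c ^ (dst - 1) < ((n:ℝ)+1) / L^2 := by
      rw [hc, hL]
      exact lt_of_not_ge hnotmem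
    -- measure chain
    have hsub := bad_subset n D
    have hbad_eq : bad n = {ω : EdgeConfig (n+1) | ¬ ∀ v : Fin (n+1), (graphOf ω).Reachable 0 v →
        (graphOf ω).dist 0 v ≤ D → ∃! p : (graphOf ω).Walk 0 v,
          p.length = (graphOf ω).dist 0 v} := by
      rw [hbad_def]
      ext ω
      simp [hgood_def, hD]
    calc erMeasure (n+1) (qSeq α (n+1)) (bad n)
        ≤ erMeasure (n+1) (qSeq α (n+1))
            (⋃ kl ∈ pairsFinset D, ⋃ g ∈ validFinset n kl.1 kl.2, tadEvent n kl.1 kl.2 g) := by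
          rw [hbad_eq]
          exact measure_mono hsub
      _ ≤ ∑ kl ∈ pairsFinset D, erMeasure (n+1) (qSeq α (n+1))
            (⋃ g ∈ validFinset n kl.1 kl.2, tadEvent n kl.1 kl.2 g) :=
          measure_biUnion_finset_le (μ := erMeasure (n+1) (qSeq α (n+1))) _ _
      _ ≤ ∑ kl ∈ pairsFinset D, ENNReal.ofReal (((n:ℝ)+1) ^ (kl.1+kl.2-1)
            * qSeq α (n+1) ^ (kl.1+kl.2)) := by
          refine Finset.sum_le_sum (fun kl hkl => ?_)
          simp only [pairsFinset, Finset.mem_filter] at hkl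
          exact tadEvent_bound n kl.1 kl.2 _ h0 h1 hkl.2.1 hkl.2.2
      _ = ENNReal.ofReal (∑ kl ∈ pairsFinset D, ((n:ℝ)+1) ^ (kl.1+kl.2-1)
            * qSeq α (n+1) ^ (kl.1+kl.2)) := by
          rw [ENNReal.ofReal_sum_of_nonneg]
          intro kl _
          have h1' : (0:ℝ) ≤ (n:ℝ)+1 := by positivity
          positivity
      _ ≤ ENNReal.ofReal (4 * c ^ (2*D) / ((n:ℝ)+1)) :=
          ENNReal.ofReal_le_ofReal (real_sum_bound n D _ h0 h2)
      _ ≤ ENNReal.ofReal (4 / L^2) := by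
          apply ENNReal.ofReal_le_ofReal
          have hc1 : (1:ℝ) ≤ c := by linarith
          have hNpos : (0:ℝ) < (n:ℝ)+1 := by positivity
          have hLpos : (0:ℝ) < L^2 := by nlinarith
          have hstep1 : c ^ (2*D) ≤ c ^ (dst - 1) := by
            apply pow_le_pow_right₀ hc1
            omega
          have hstep2 : c ^ (2*D) ≤ ((n:ℝ)+1) / L^2 := le_trans hstep1 hkey.le
          calc 4 * c ^ (2*D) / ((n:ℝ)+1) ≤ 4 * (((n:ℝ)+1) / L^2) / ((n:ℝ)+1) := by gcongr
            _ = 4 / L^2 := by field_simp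
  -- limit of the bad measure is 0
  have hLinf : Tendsto (fun n : ℕ => 4 / (Real.log (Real.log ((n:ℝ)+1)))^2) atTop (nhds 0) := by
    apply Tendsto.div_atTop (tendsto_const_nhds)
    have := hloglogN.atTop_mul_atTop₀ hloglogN
    simpa [pow_two] using this
  have hofReal : Tendsto (fun n : ℕ =>
      ENNReal.ofReal (4 / (Real.log (Real.log ((n:ℝ)+1)))^2)) atTop (nhds 0) := by
    have := ENNReal.tendsto_ofReal hLinf
    simpa using this
  have hzero : Tendsto (fun n => erMeasure (n+1) (qSeq α (n+1)) (bad n)) atTop (nhds 0) :=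
    tendsto_of_tendsto_of_tendsto_of_le_of_le' tendsto_const_nhds hofReal
      (Eventually.of_forall (fun n => zero_le)) hbound
  -- conclude
  have hcompl : ∀ᶠ n : ℕ in atTop, erMeasure (n+1) (qSeq α (n+1)) (good n)
      = 1 - erMeasure (n+1) (qSeq α (n+1)) (bad n) := by
    filter_upwards [hq0, hq1] with n h0 h1
    haveI := erMeasure_prob (n+1) (qSeq α (n+1)) h0 h1
    have hm : MeasurableSet (good n) := Set.Finite.measurableSet (Set.toFinite _)
    have hne : erMeasure (n+1) (qSeq α (n+1)) (good n) ≠ ⊤ := measure_ne_top _ _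
    have := measure_compl hm hne
    rw [measure_univ] at this
    rw [hbad_def]
    simp only
    rw [this, ENNReal.sub_sub_cancel ENNReal.one_ne_top (prob_le_one)]
  have h1 : Tendsto (fun n => (1:ENNReal) - erMeasure (n+1) (qSeq α (n+1)) (bad n))
      atTop (nhds 1) := by
    have := ENNReal.Tendsto.sub (tendsto_const_nhds (x := (1:ENNReal))) hzero
      (Or.inl ENNReal.one_ne_top)
    simpa using this
  exact h1.congr' (hcompl.mono (fun n h => h.symm))
end
end

section
/- With probability tending to 1 as n → ∞, the graph G_n contains no cycle of length smaller than d*_n passing through vertex 1. -/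
open MeasureTheory Filter

noncomputable section

/-! ### Auxiliary lemmas -/

section Aux

open SimpleGraph

lemma bern_true (q : ℝ) : bernoulliBool q {true} = ENNReal.ofReal q := by
  simp [bernoulliBool, Measure.dirac_apply]

lemma bern_univ (q : ℝ) (h0 : 0 ≤ q) (h1 : q ≤ 1) : bernoulliBool q Set.univ = 1 := by
  simp [bernoulliBool]
  rw [← ENNReal.ofReal_add (by linarith) h0]
  norm_num

instance (q : ℝ) : IsFiniteMeasure (bernoulliBool q) := by
  constructor
  simp [bernoulliBool]

lemma erMeasure_cylinder (n : ℕ) (q : ℝ) (h0 : 0 ≤ q) (h1 : q ≤ 1)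
    (S : Finset (Fin n × Fin n)) :
    erMeasure n q {ω : EdgeConfig n | ∀ p ∈ S, ω p.1 p.2 = true}
      = ENNReal.ofReal q ^ S.card := by
  have hset : {ω : EdgeConfig n | ∀ p ∈ S, ω p.1 p.2 = true}
      = Set.pi Set.univ (fun a => Set.pi Set.univ
          (fun b => if (a, b) ∈ S then {true} else (Set.univ : Set Bool))) := by
    ext ω
    simp only [Set.mem_setOf_eq, Set.mem_pi, Set.mem_univ, forall_true_left]
    constructor
    · intro h a b
      split_ifs with hs
      · exact h (a, b) hs
      · trivial
    · intro h p hp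
      have := h p.1 p.2
      rwa [if_pos hp] at this
  rw [erMeasure, hset, Measure.pi_pi]
  have : ∀ a : Fin n, (Measure.pi fun _ => bernoulliBool q)
      (Set.pi Set.univ (fun b => if (a, b) ∈ S then {true} else (Set.univ : Set Bool)))
      = ∏ b : Fin n, (if (a, b) ∈ S then ENNReal.ofReal q else 1) := by
    intro a
    rw [Measure.pi_pi]
    congr 1; ext b
    split_ifs
    · exact bern_true q
    · exact bern_univ q h0 h1
  simp_rw [this]
  rw [← Finset.prod_product']
  rw [Finset.prod_ite_mem, Finset.univ_product_univ, Finset.univ_inter, Finset.prod_const]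

lemma erMeasure_univ (n : ℕ) (q : ℝ) (h0 : 0 ≤ q) (h1 : q ≤ 1) :
    erMeasure n q Set.univ = 1 := by
  haveI : IsProbabilityMeasure (bernoulliBool q) := ⟨bern_univ q h0 h1⟩
  rw [erMeasure]
  exact measure_univ

lemma edges_getElem {V : Type*} {G : SimpleGraph V} {u v : V} (p : G.Walk u v) :
    ∀ (i : ℕ) (h : i < p.length),
      p.edges[i]'(by rwa [Walk.length_edges]) = s(p.getVert i, p.getVert (i + 1)) := by
  induction p with
  | nil => intro i h; simp at h
  | cons h' p ih =>
    intro i h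
    cases i with
    | zero => simp [Walk.edges_cons]
    | succ i =>
      simp only [Walk.edges_cons, List.getElem_cons_succ, Walk.getVert_cons_succ]
      exact ih i (by simpa [Walk.length_cons] using h)

lemma sym2_minmax {α : Type*} [LinearOrder α] (a b : α) : s(min a b, max a b) = s(a, b) := by
  rcases le_total a b with h | h
  · rw [min_eq_left h, max_eq_right h]
  · rw [min_eq_right h, max_eq_left h, Sym2.eq_swap]

/-- The pair-valued edge map of a cyclic vertex tuple. -/
def pairMap {n k : ℕ} (f : Fin (k+3) → Fin n) (i : Fin (k+3)) : Fin n × Fin n :=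
  (min (f i) (f (i+1)), max (f i) (f (i+1)))

def pairFS {n k : ℕ} (f : Fin (k+3) → Fin n) : Finset (Fin n × Fin n) :=
  Finset.image (pairMap f) Finset.univ

def Ffin (n k : ℕ) : Finset (Fin (k+3) → Fin (n+1)) :=
  Finset.univ.filter (fun f => f 0 = 0 ∧ (pairFS f).card = k + 3)

lemma Ffin_card (n k : ℕ) : (Ffin n k).card ≤ (n+1)^(k+2) := by
  have h := Finset.card_le_card_of_injOn (f := fun (f : Fin (k+3) → Fin (n+1)) => f ∘ Fin.succ)
    (s := Ffin n k) (t := (Finset.univ : Finset (Fin (k+2) → Fin (n+1))))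
    (fun _ _ => Finset.mem_univ _) ?_
  · calc (Ffin n k).card ≤ _ := h
      _ = (n+1)^(k+2) := by
        rw [Finset.card_univ, Fintype.card_fun, Fintype.card_fin, Fintype.card_fin]
  · intro f hf g hg hfg
    have hf0 : f 0 = 0 := (Finset.mem_filter.mp hf).2.1
    have hg0 : g 0 = 0 := (Finset.mem_filter.mp hg).2.1
    funext i
    induction i using Fin.cases with
    | zero => rw [hf0, hg0]
    | succ j => exact congrFun hfg j

lemma bad_subset (n d : ℕ) :
    {ω : EdgeConfig (n+1) | ¬ ∀ (u : Fin (n + 1)) (c : (graphOf ω).Walk u u),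
        c.IsCycle → (0 : Fin (n + 1)) ∈ c.support → d ≤ c.length}
    ⊆ ⋃ k ∈ Finset.range (d - 3), ⋃ f ∈ Ffin n k,
        {ω : EdgeConfig (n+1) | ∀ p ∈ pairFS f, ω p.1 p.2 = true} := by
  intro ω hω
  simp only [Set.mem_setOf_eq, not_forall] at hω
  obtain ⟨u, c, hc, h0, hlen⟩ := hω
  rw [not_le] at hlen
  set c' := c.rotate _ h0 with hc'def
  have hc' : c'.IsCycle := hc.rotate h0
  have hlen' : c'.length = c.length := by
    rw [← Walk.length_edges, ← Walk.length_edges]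
    exact (Walk.rotate_edges c _ h0).perm.length_eq
  have hl3 : 3 ≤ c'.length := hc'.three_le_length
  set k := c'.length - 3 with hkdef
  have hk : c'.length = k + 3 := by omega
  have hkd : k < d - 3 := by omega
  set f : Fin (k+3) → Fin (n+1) := fun i => c'.getVert i.val with hfdef
  have hval : ∀ i : Fin (k+3), f (i+1) = c'.getVert (i.val + 1) := by
    intro i
    rcases eq_or_lt_of_le (Fin.le_last i) with h | h
    · have h1 : i + 1 = 0 := by rw [h, Fin.last_add_one]
      have h2 : i.val = k + 2 := by rw [h]; rfl
      rw [h1, h2, hfdef]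
      show c'.getVert 0 = c'.getVert (k + 3)
      rw [Walk.getVert_zero, ← hk, Walk.getVert_length]
    · rw [hfdef]
      show c'.getVert (i+1).val = c'.getVert (i.val + 1)
      rw [Fin.val_add_one_of_lt h]
  have hadj : ∀ i : Fin (k+3), (graphOf ω).Adj (f i) (f (i+1)) := by
    intro i
    rw [hval]
    exact c'.adj_getVert_succ (by rw [hk]; exact i.isLt)
  have hkey : ∀ i : Fin (k+3),
      s(f i, f (i+1)) = c'.edges[i.val]'(by rw [Walk.length_edges, hk]; exact i.isLt) := by
    intro i
    rw [hval]
    exact (edges_getElem c' i.val (by rw [hk]; exact i.isLt)).symm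
  have hinj : Function.Injective (pairMap f) := by
    intro i j hij
    have hsym : s(f i, f (i+1)) = s(f j, f (j+1)) := by
      rw [← sym2_minmax (f i) (f (i+1)), ← sym2_minmax (f j) (f (j+1))]
      exact congrArg (fun p : Fin (n+1) × Fin (n+1) => s(p.1, p.2)) hij
    rw [hkey i, hkey j] at hsym
    have hnd : c'.edges.Nodup := hc'.isCircuit.isTrail.edges_nodup
    exact Fin.ext ((hnd.getElem_inj_iff).mp hsym)
  refine Set.mem_iUnion₂.2 ⟨k, Finset.mem_range.2 hkd, Set.mem_iUnion₂.2 ⟨f, ?_, ?_⟩⟩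
  · refine Finset.mem_filter.2 ⟨Finset.mem_univ _, ?_, ?_⟩
    · show c'.getVert (0 : Fin (k+3)).val = 0
      rw [Fin.val_zero, Walk.getVert_zero]
    · rw [pairFS, Finset.card_image_of_injective _ hinj, Finset.card_univ, Fintype.card_fin]
  · intro p hp
    obtain ⟨i, _, hip⟩ := Finset.mem_image.mp hp
    rw [← hip]
    exact (hadj i).2

lemma bad_measure_le (n d : ℕ) (q : ℝ) (h0 : 0 ≤ q) (h1 : q ≤ 1) :
    erMeasure (n+1) q {ω : EdgeConfig (n+1) | ¬ ∀ (u : Fin (n + 1))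
        (c : (graphOf ω).Walk u u),
        c.IsCycle → (0 : Fin (n + 1)) ∈ c.support → d ≤ c.length}
      ≤ ∑ k ∈ Finset.range (d - 3),
          (((n+1)^(k+2) : ℕ) : ENNReal) * ENNReal.ofReal q ^ (k+3) := by
  refine le_trans (measure_mono (bad_subset n d)) ?_
  refine le_trans (measure_biUnion_finset_le _ _) ?_
  refine Finset.sum_le_sum fun k _ => ?_
  refine le_trans (measure_biUnion_finset_le _ _) ?_
  have heq : ∀ f ∈ Ffin n k,
      erMeasure (n+1) q {ω : EdgeConfig (n+1) | ∀ p ∈ pairFS f, ω p.1 p.2 = true}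
        = ENNReal.ofReal q ^ (k+3) := by
    intro f hf
    rw [erMeasure_cylinder _ _ h0 h1, (Finset.mem_filter.mp hf).2.2]
  rw [Finset.sum_congr rfl heq, Finset.sum_const, nsmul_eq_mul]
  exact mul_le_mul_left (by exact_mod_cast Nat.cast_le.mpr (Ffin_card n k)) _

lemma geom_aux (Q : ℝ) (hQ : 2 ≤ Q) (K : ℕ) :
    ∑ k ∈ Finset.range K, Q^(k+3) ≤ 2 * Q^(K+2) := by
  have hQ0 : (0:ℝ) ≤ Q := by linarith
  induction K with
  | zero => simp; positivity
  | succ K ih =>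
    rw [Finset.sum_range_succ]
    have h1 : 2 * Q^(K+2) ≤ Q^(K+3) := by
      rw [pow_succ]
      calc 2 * Q^(K+2) = Q^(K+2) * 2 := by ring
        _ ≤ Q^(K+2) * Q := by
            exact mul_le_mul_of_nonneg_left hQ (pow_nonneg hQ0 _)
    have h2 : K + 1 + 2 = K + 3 := by omega
    rw [h2]
    calc ∑ k ∈ Finset.range K, Q^(k+3) + Q^(K+3)
        ≤ 2 * Q^(K+2) + Q^(K+3) := by linarith
      _ ≤ Q^(K+3) + Q^(K+3) := by linarith
      _ = 2 * Q^(K+3) := by ring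

lemma real_sum_bound (n : ℕ) (q : ℝ) (hq0 : 0 ≤ q)
    (hQ2 : 2 ≤ ((n+1 : ℕ) : ℝ) * q)
    (hLL : 0 < Real.log (Real.log ((n+1 : ℕ) : ℝ))) :
    ∑ k ∈ Finset.range (dstar (n+1) q - 3), ((n+1 : ℕ) : ℝ)^(k+2) * q^(k+3)
      ≤ 2 / Real.log (Real.log ((n+1 : ℕ) : ℝ)) ^ 2 := by
  set m : ℝ := ((n+1 : ℕ) : ℝ) with hm
  set LL : ℝ := Real.log (Real.log m) with hLLdef
  set d := dstar (n+1) q with hd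
  have hm0 : (0:ℝ) < m := by
    rw [hm]; exact_mod_cast Nat.succ_pos n
  set Q : ℝ := m * q with hQ
  have hdef : d = sInf {e : ℕ | m / LL^2 ≤ Q^e} := rfl
  have hterm : ∀ k, m^(k+2) * q^(k+3) = Q^(k+3) / m := by
    intro k
    rw [hQ, mul_pow]
    field_simp
    ring
  rw [Finset.sum_congr rfl (fun k _ => hterm k), ← Finset.sum_div]
  rcases le_or_gt d 3 with h3 | h3
  · have h0 : d - 3 = 0 := by omega
    rw [h0]
    simp only [Finset.range_zero, Finset.sum_empty, zero_div]
    positivity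
  · have hsum := geom_aux Q hQ2 (d - 3)
    have hKe : d - 3 + 2 = d - 1 := by omega
    rw [hKe] at hsum
    have hnot : Q^(d-1) < m / LL^2 := by
      by_contra hcon
      push_neg at hcon
      have hmem : (d - 1) ∈ {e : ℕ | m / LL^2 ≤ Q^e} := hcon
      have := Nat.sInf_le hmem
      rw [← hdef] at this
      omega
    have hQ0 : (0:ℝ) ≤ Q := by linarith
    calc (∑ k ∈ Finset.range (d-3), Q^(k+3)) / m ≤ (2 * Q^(d-1)) / m := by
          exact div_le_div_of_nonneg_right hsum hm0.le
      _ ≤ (2 * (m / LL^2)) / m := by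
          apply div_le_div_of_nonneg_right _ hm0.le
          linarith
      _ = 2 / LL^2 := by
          field_simp

end Aux

/-! ### Main theorem -/

/-- Corollary 3.6.  With probability tending to `1`, the random graph
contains no cycle of length smaller than `d*_n` passing through the root vertex
(vertex "1" of the paper, formalized as `0 : Fin (n+1)`; graphs on `n+1` vertices are
indexed by `n`). -/
theorem no_short_cycle_through_root
    (α : ℕ → ℝ) (a b : ℝ) (ha : 0 < a)
    (hαbound : ∀ᶠ n in atTop, a ≤ α n ∧ α n ≤ b) :
    Tendsto (fun n => erMeasure (n + 1) (qSeq α (n + 1))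
        {ω : EdgeConfig (n + 1) |
          ∀ (u : Fin (n + 1)) (c : (graphOf ω).Walk u u),
            c.IsCycle → (0 : Fin (n + 1)) ∈ c.support →
              dstar (n + 1) (qSeq α (n + 1)) ≤ c.length})
      atTop (nhds 1) := by
  classical
  set μB : ℕ → ENNReal := fun n => erMeasure (n+1) (qSeq α (n+1))
      {ω : EdgeConfig (n+1) | ¬ ∀ (u : Fin (n + 1)) (c : (graphOf ω).Walk u u),
        c.IsCycle → (0 : Fin (n + 1)) ∈ c.support →
          dstar (n + 1) (qSeq α (n + 1)) ≤ c.length} with hμB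
  -- basic limits
  have hmem : Tendsto (fun n : ℕ => ((n+1 : ℕ) : ℝ)) atTop atTop :=
    tendsto_natCast_atTop_atTop.comp (tendsto_add_atTop_nat 1)
  have hlog : Tendsto (fun n : ℕ => Real.log ((n+1 : ℕ) : ℝ)) atTop atTop :=
    Real.tendsto_log_atTop.comp hmem
  have hloglog : Tendsto (fun n : ℕ => Real.log (Real.log ((n+1 : ℕ) : ℝ))) atTop atTop :=
    Real.tendsto_log_atTop.comp hlog
  have hα' : ∀ᶠ n in atTop, a ≤ α (n+1) ∧ α (n+1) ≤ b :=
    (tendsto_add_atTop_nat 1).eventually hαbound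
  have hLa : ∀ᶠ n in atTop, 2 / a ≤ Real.log ((n+1 : ℕ) : ℝ) :=
    hlog.eventually_ge_atTop _
  have hLL : ∀ᶠ n in atTop, 0 < Real.log (Real.log ((n+1:ℕ):ℝ)) :=
    hloglog.eventually_gt_atTop 0
  have hlogdiv : Tendsto (fun n : ℕ => Real.log ((n+1:ℕ):ℝ) / ((n+1:ℕ):ℝ)) atTop (nhds 0) :=
    Real.isLittleO_log_id_atTop.tendsto_div_nhds_zero.comp hmem
  have hqsmall : ∀ᶠ n in atTop, b * (Real.log ((n+1:ℕ):ℝ) / ((n+1:ℕ):ℝ)) < 1 := by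
    have : Tendsto (fun n : ℕ => b * (Real.log ((n+1:ℕ):ℝ) / ((n+1:ℕ):ℝ))) atTop
        (nhds (b * 0)) := hlogdiv.const_mul b
    rw [mul_zero] at this
    exact this.eventually_lt_const one_pos
  -- eventual facts: q-range and main bound
  have hbound : ∀ᶠ n in atTop, (0 ≤ qSeq α (n+1) ∧ qSeq α (n+1) ≤ 1) ∧
      μB n ≤ ENNReal.ofReal (2 / Real.log (Real.log ((n+1:ℕ):ℝ)) ^ 2) := by
    filter_upwards [hα', hLa, hLL, hqsmall] with n hab h2a hLL0 hqs
    obtain ⟨ha1, hb1⟩ := hab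
    set m : ℝ := ((n+1 : ℕ) : ℝ) with hm
    have hm0 : (0:ℝ) < m := by rw [hm]; exact_mod_cast Nat.succ_pos n
    have hL0 : (0:ℝ) ≤ Real.log m := le_trans (by positivity) h2a
    have hqval : qSeq α (n+1) = α (n+1) * Real.log m / m := rfl
    have hq0 : 0 ≤ qSeq α (n+1) := by
      rw [hqval]
      have : (0:ℝ) ≤ α (n+1) := le_trans ha.le ha1
      positivity
    have hq1 : qSeq α (n+1) ≤ 1 := by
      rw [hqval]
      have h1 : α (n+1) * Real.log m / m = α (n+1) * (Real.log m / m) := by ring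
      rw [h1]
      refine le_of_lt (lt_of_le_of_lt ?_ hqs)
      exact mul_le_mul_of_nonneg_right hb1 (by positivity)
    have hQ2 : 2 ≤ m * qSeq α (n+1) := by
      have hmne : m ≠ 0 := ne_of_gt hm0
      have : m * qSeq α (n+1) = α (n+1) * Real.log m := by
        rw [hqval]; field_simp
      rw [this]
      calc (2:ℝ) = a * (2 / a) := by field_simp
        _ ≤ α (n+1) * Real.log m := by
            apply mul_le_mul ha1 h2a (by positivity) (le_trans ha.le ha1)
    refine ⟨⟨hq0, hq1⟩, ?_⟩
    calc μB n ≤ ∑ k ∈ Finset.range (dstar (n+1) (qSeq α (n+1)) - 3),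
          ((((n+1))^(k+2) : ℕ) : ENNReal) * ENNReal.ofReal (qSeq α (n+1)) ^ (k+3) :=
          bad_measure_le n _ _ hq0 hq1
      _ = ENNReal.ofReal (∑ k ∈ Finset.range (dstar (n+1) (qSeq α (n+1)) - 3),
          m^(k+2) * (qSeq α (n+1))^(k+3)) := by
          rw [ENNReal.ofReal_sum_of_nonneg]
          · refine Finset.sum_congr rfl fun k _ => ?_
            rw [ENNReal.ofReal_mul (by positivity), ENNReal.ofReal_pow hq0]
            congr 1
            rw [hm]
            rw [← ENNReal.ofReal_natCast ((n+1)^(k+2))]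
            congr 1
            push_cast
            ring
          · intro k _
            have := hq0
            positivity
      _ ≤ ENNReal.ofReal (2 / Real.log (Real.log m) ^ 2) := by
          apply ENNReal.ofReal_le_ofReal
          exact real_sum_bound n _ hq0 hQ2 hLL0
  -- the bad probability tends to zero
  have hbad0 : Tendsto μB atTop (nhds 0) := by
    have htop : Tendsto (fun n : ℕ => Real.log (Real.log ((n+1:ℕ):ℝ)) ^ 2) atTop atTop :=
      (tendsto_pow_atTop (by norm_num : (2:ℕ) ≠ 0)).comp hloglog
    have hreal : Tendsto (fun n : ℕ => 2 / Real.log (Real.log ((n+1:ℕ):ℝ)) ^ 2) atTop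
        (nhds 0) := tendsto_const_nhds.div_atTop htop
    have hofreal : Tendsto (fun n : ℕ =>
        ENNReal.ofReal (2 / Real.log (Real.log ((n+1:ℕ):ℝ)) ^ 2)) atTop (nhds 0) := by
      have := ENNReal.tendsto_ofReal hreal
      simpa using this
    refine tendsto_of_tendsto_of_tendsto_of_le_of_le' tendsto_const_nhds hofreal
      (Eventually.of_forall fun n => zero_le) (hbound.mono fun n h => h.2)
  -- identify the goal measure with 1 - μB
  have hfin : ∀ᶠ n in atTop,
      erMeasure (n + 1) (qSeq α (n + 1))
        {ω : EdgeConfig (n + 1) |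
          ∀ (u : Fin (n + 1)) (c : (graphOf ω).Walk u u),
            c.IsCycle → (0 : Fin (n + 1)) ∈ c.support →
              dstar (n + 1) (qSeq α (n + 1)) ≤ c.length} = 1 - μB n := by
    filter_upwards [hbound] with n h
    obtain ⟨⟨hq0, hq1⟩, _⟩ := h
    set G : Set (EdgeConfig (n+1)) := {ω : EdgeConfig (n + 1) |
          ∀ (u : Fin (n + 1)) (c : (graphOf ω).Walk u u),
            c.IsCycle → (0 : Fin (n + 1)) ∈ c.support →
              dstar (n + 1) (qSeq α (n + 1)) ≤ c.length} with hG
    have hGc : Gᶜ = {ω : EdgeConfig (n+1) | ¬ ∀ (u : Fin (n + 1))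
        (c : (graphOf ω).Walk u u),
        c.IsCycle → (0 : Fin (n + 1)) ∈ c.support →
          dstar (n + 1) (qSeq α (n + 1)) ≤ c.length} := by
      rw [hG, Set.compl_setOf]
    have huniv : erMeasure (n+1) (qSeq α (n+1)) Set.univ = 1 :=
      erMeasure_univ _ _ hq0 hq1
    have hmeas : MeasurableSet Gᶜ := (Set.to_countable _).measurableSet
    have hne : erMeasure (n+1) (qSeq α (n+1)) Gᶜ ≠ ⊤ := by
      refine ne_of_lt (lt_of_le_of_lt (measure_mono (Set.subset_univ _)) ?_)
      rw [huniv]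
      exact ENNReal.one_lt_top
    have := measure_compl hmeas hne
    rw [compl_compl, huniv] at this
    rw [this, hμB, hGc]
  -- conclude
  have hone : Tendsto (fun n => 1 - μB n) atTop (nhds 1) := by
    have := ENNReal.Tendsto.sub (tendsto_const_nhds (x := (1:ENNReal)) (f := atTop)) hbad0
      (Or.inl ENNReal.one_ne_top)
    simpa using this
  exact Tendsto.congr' (hfin.mono fun n h => h.symm) hone

end
end
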